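/- Fix an integer M ≥ 2, layer sizes H_0, …, H_M ≥ 1, inputs X₁, …, X_n ∈ ℝ^N with at least one X_k nonzero, and targets Y₁, …, Y_n ∈ ℝ^{N'}. Let L_n(w) = (1/n) Σ_i ‖Y_i − f(X_i; w)‖², and for constants n, β > 0, γ > 0 and a fixed w_μ ∈ ℝ^d define the log tempered posterior (up to an additive constant) log π(w) = −nβ L_n(w) − (γ/2)‖w − w_μ‖². Then there is no constant α > 0 such that ‖∇log π(w₁) − ∇log π(w₂)‖ ≤ α‖w₁ − w₂‖ for all w₁, w₂ ∈ ℝ^d; in particular ∇L_n is not globally Lipschitz. -/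

import Mathlib

/-
Fix an input coordinate j₀ with X_k j₀ ≠ 0 for some sample k, and let e put weight 1 on the edges
of one path j₀ → 0 → 0 → ⋯ → 0 through the network. Along the line t ↦ t • e the network output is
t^M times a fixed vector, so L_n and log π restrict to polynomials in t of degree 2M ≥ 4. If a
gradient were Lipschitz, then t ↦ ⟪∇f(t • e), e⟫, the derivative of such a restriction and a
polynomial of degree 2M - 1 ≥ 3, would be Lipschitz; but a polynomial with Lipschitz evaluation
has a bounded derivative, hence degree at most 1.
-/

/-- The end-to-end matrix `W_M ⋯ W_1` of a deep linear network with layer sizes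
`H 0, H 1, …` and weight matrices `w l : Matrix (Fin (H (l+1))) (Fin (H l)) ℝ`. -/
def dlnProd (H : ℕ → ℕ) (w : ∀ l : ℕ, Matrix (Fin (H (l + 1))) (Fin (H l)) ℝ) :
    (M : ℕ) → Matrix (Fin (H M)) (Fin (H 0)) ℝ
  | 0 => 1
  | M + 1 => w M * dlnProd H w M

/-- Index type for the `d = Σ_{l=1}^M H_l H_{l-1}` matrix entries of the parameter
`w = (W_1, …, W_M)`, so that the parameter space is `ℝ^d = EuclideanSpace ℝ (DlnVars H M)`. -/
abbrev DlnVars (H : ℕ → ℕ) (M : ℕ) := (l : Fin M) × (Fin (H (l.1 + 1)) × Fin (H l.1))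

/-- Reassemble a parameter vector `w ∈ ℝ^d` into the tuple of weight matrices. -/
def dlnToMats (M : ℕ) (H : ℕ → ℕ) (w : DlnVars H M → ℝ) :
    ∀ l : ℕ, Matrix (Fin (H (l + 1))) (Fin (H l)) ℝ :=
  fun l => Matrix.of fun i j => if h : l < M then w ⟨⟨l, h⟩, (i, j)⟩ else 0

/-- The empirical loss `L_n(w) = (1/n) Σ_k ‖Y_k − f(X_k; w)‖²` of a deep linear
network, as a function on the parameter space `ℝ^d`. -/
noncomputable def dlnEmpLoss (M : ℕ) (H : ℕ → ℕ) (n : ℕ)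
    (X : Fin n → Fin (H 0) → ℝ) (Y : Fin n → Fin (H M) → ℝ)
    (w : EuclideanSpace ℝ (DlnVars H M)) : ℝ :=
  (1 / (n : ℝ)) * ∑ k : Fin n, ∑ i : Fin (H M),
    (Y k i - (dlnProd H (dlnToMats M H (fun v => w v)) M).mulVec (X k) i) ^ 2

/-- The log tempered posterior (up to an additive constant)
`log π(w) = −nβ L_n(w) − (γ/2)‖w − w_μ‖²` with Gaussian localization prior. -/
noncomputable def dlnLogPost (M : ℕ) (H : ℕ → ℕ) (n : ℕ)
    (X : Fin n → Fin (H 0) → ℝ) (Y : Fin n → Fin (H M) → ℝ) (β γ : ℝ)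
    (wμ : EuclideanSpace ℝ (DlnVars H M)) (w : EuclideanSpace ℝ (DlnVars H M)) : ℝ :=
  -((n : ℝ) * β) * dlnEmpLoss M H n X Y w - (γ / 2) * ‖w - wμ‖ ^ 2

open Filter Polynomial RealInnerProductSpace
open scoped NNReal

theorem Polynomial.natDegree_le_one_of_lipschitzWith_eval {P : ℝ[X]} {K : ℝ≥0}
    (hP : LipschitzWith K fun x => P.eval x) : P.natDegree ≤ 1 := by
  have hbdd : IsBoundedUnder (· ≤ ·) atTop fun x => |P.derivative.eval x| :=
    isBoundedUnder_of ⟨K, fun x => by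
      simpa [Polynomial.deriv] using norm_deriv_le_of_lipschitz (x₀ := x) hP⟩
  have h0 : P.derivative.natDegree = 0 :=
    natDegree_eq_zero_iff_degree_le_zero.mpr ((isBoundedUnder_abs_atTop_iff _).mp hbdd)
  rw [natDegree_derivative] at h0
  omega

theorem not_exists_norm_sub_le_mul_of_forall_not_lipschitzWith {E F : Type*}
    [SeminormedAddCommGroup E] [SeminormedAddCommGroup F] {g : E → F}
    (hg : ∀ K, ¬ LipschitzWith K g) :
    ¬ ∃ α : ℝ, 0 < α ∧ ∀ x y, ‖g x - g y‖ ≤ α * ‖x - y‖ := by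
  rintro ⟨α, hα, h⟩
  exact hg ⟨α, hα.le⟩ (LipschitzWith.of_dist_le_mul fun x y => by
    rw [dist_eq_norm, dist_eq_norm]; exact h x y)

section LineRestriction

variable {E : Type*} [NormedAddCommGroup E] [InnerProductSpace ℝ E] [CompleteSpace E]

theorem hasDerivAt_comp_smul_const {f : E → ℝ} (hf : Differentiable ℝ f) (e : E) (t : ℝ) :
    HasDerivAt (fun s : ℝ => f (s • e)) ⟪gradient f (t • e), e⟫ t := by
  have hline : HasDerivAt (fun s : ℝ => s • e) e t := by
    simpa using (hasDerivAt_id t).smul_const e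
  have := (hf (t • e)).hasGradientAt.hasFDerivAt.comp_hasDerivAt t hline
  rwa [InnerProductSpace.toDual_apply_apply] at this

theorem not_lipschitzWith_gradient_of_eval_smul {f : E → ℝ} (hf : Differentiable ℝ f)
    {e : E} {P : ℝ[X]} (hP : 3 ≤ P.natDegree) (hfP : ∀ t : ℝ, f (t • e) = P.eval t)
    (K : ℝ≥0) : ¬ LipschitzWith K (gradient f) := by
  intro hK
  have hderiv : ∀ t, P.derivative.eval t = ⟪e, gradient f (t • e)⟫ := fun t => by
    rw [real_inner_comm]
    refine (Polynomial.hasDerivAt P t).unique ?_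
    simpa only [← hfP] using hasDerivAt_comp_smul_const hf e t
  have hlip := (innerSL ℝ e).lipschitz.comp
    (hK.comp (ContinuousLinearMap.toSpanSingleton ℝ e).lipschitz)
  have hcomp : ⇑(innerSL ℝ e) ∘ gradient f ∘ ⇑(ContinuousLinearMap.toSpanSingleton ℝ e) =
      fun t => P.derivative.eval t := funext fun t => (hderiv t).symm
  rw [hcomp] at hlip
  have := natDegree_le_one_of_lipschitzWith_eval hlip
  rw [natDegree_derivative] at this
  omega

end LineRestriction

/-- The weight of the edge from unit `j` of layer `l` to unit `i` of layer `l + 1` is `1` if the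
path `p` passes through both, and `0` otherwise. -/
def dlnPathParam (M : ℕ) (H : ℕ → ℕ) (p : ℕ → ℕ) : EuclideanSpace ℝ (DlnVars H M) :=
  WithLp.toLp 2 fun v => if v.2.1.1 = p (v.1.1 + 1) ∧ v.2.2.1 = p v.1.1 then 1 else 0

section PathParam

variable {M : ℕ} {H : ℕ → ℕ} {p : ℕ → ℕ}

theorem dlnToMats_smul_dlnPathParam (t : ℝ) {l : ℕ} (hl : l < M) (i : Fin (H (l + 1)))
    (j : Fin (H l)) :
    dlnToMats M H (fun v => (t • dlnPathParam M H p) v) l i j =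
      if i.1 = p (l + 1) ∧ j.1 = p l then t else 0 := by
  simp [dlnToMats, dlnPathParam, hl]

theorem dlnProd_smul_dlnPathParam (hp : ∀ l ≤ M, p l < H l) (t : ℝ) {L : ℕ} (hL : L < M)
    (i : Fin (H (L + 1))) (j : Fin (H 0)) :
    dlnProd H (dlnToMats M H fun v => (t • dlnPathParam M H p) v) (L + 1) i j =
      if i.1 = p (L + 1) ∧ j.1 = p 0 then t ^ (L + 1) else 0 := by
  induction L with
  | zero =>
    rw [dlnProd, dlnProd, Matrix.mul_one, dlnToMats_smul_dlnPathParam t hL]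
    simp
  | succ L ih =>
    rw [dlnProd, Matrix.mul_apply, Finset.sum_eq_single ⟨p (L + 1), hp _ hL.le⟩]
    · rw [dlnToMats_smul_dlnPathParam t hL, ih (by omega)]
      split_ifs <;> simp_all [pow_succ']
    · intro k _ hk
      rw [ih (by omega)]
      have hk' : k.1 ≠ p (L + 1) := fun h => hk (Fin.ext h)
      simp [hk']
    · simp

theorem dlnProd_mulVec_smul_dlnPathParam (hM : 0 < M) (hp : ∀ l ≤ M, p l < H l) (t : ℝ)
    (x : Fin (H 0) → ℝ) (i : Fin (H M)) :
    (dlnProd H (dlnToMats M H fun v => (t • dlnPathParam M H p) v) M).mulVec x i =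
      if i.1 = p M then t ^ M * x ⟨p 0, hp 0 (Nat.zero_le M)⟩ else 0 := by
  obtain ⟨L, rfl⟩ := Nat.exists_eq_add_one_of_ne_zero hM.ne'
  rw [Matrix.mulVec, dotProduct, Finset.sum_eq_single ⟨p 0, hp 0 (Nat.zero_le _)⟩]
  · rw [dlnProd_smul_dlnPathParam hp t (by omega)]
    simp
  · intro j _ hj
    rw [dlnProd_smul_dlnPathParam hp t (by omega)]
    have hj' : j.1 ≠ p 0 := fun h => hj (Fin.ext h)
    simp [hj']
  · simp

theorem dlnEmpLoss_smul_dlnPathParam (hM : 0 < M) (hp : ∀ l ≤ M, p l < H l) {n : ℕ}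
    (x : Fin n → Fin (H 0) → ℝ) (y : Fin n → Fin (H M) → ℝ) (t : ℝ) :
    dlnEmpLoss M H n x y (t • dlnPathParam M H p) =
      eval t (C ((1 / n) * ∑ k, x k ⟨p 0, hp 0 (Nat.zero_le M)⟩ ^ 2) * X ^ (2 * M)
        + C (-(2 / n) * ∑ k, x k ⟨p 0, hp 0 (Nat.zero_le M)⟩ * y k ⟨p M, hp M le_rfl⟩) * X ^ M
        + C ((1 / n) * ∑ k, ∑ i, y k i ^ 2)) := by
  have hsample (k : Fin n) :
      ∑ i, (y k i - (dlnProd H (dlnToMats M H fun v => (t • dlnPathParam M H p) v) M).mulVec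
          (x k) i) ^ 2 =
        x k ⟨p 0, hp 0 (Nat.zero_le M)⟩ ^ 2 * t ^ (2 * M)
          - 2 * (x k ⟨p 0, hp 0 (Nat.zero_le M)⟩ * y k ⟨p M, hp M le_rfl⟩) * t ^ M
          + ∑ i, y k i ^ 2 := by
    have hrow (i : Fin (H M)) :
        (dlnProd H (dlnToMats M H fun v => (t • dlnPathParam M H p) v) M).mulVec (x k) i =
          if i = ⟨p M, hp M le_rfl⟩ then t ^ M * x k ⟨p 0, hp 0 (Nat.zero_le M)⟩ else 0 := by
      rw [dlnProd_mulVec_smul_dlnPathParam hM hp]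
      simp [Fin.ext_iff]
    simp only [hrow, sub_sq, Finset.sum_add_distrib, Finset.sum_sub_distrib, ite_pow, mul_ite,
      mul_zero, ne_eq, OfNat.ofNat_ne_zero, not_false_eq_true, zero_pow, Finset.sum_ite_eq',
      Finset.mem_univ, if_true]
    ring
  simp only [dlnEmpLoss, hsample, eval_add, eval_mul, eval_C, eval_pow, eval_X,
    Finset.sum_add_distrib, Finset.sum_sub_distrib, ← Finset.sum_mul, ← Finset.mul_sum]
  ring

end PathParam

theorem differentiable_dlnProd_apply (M : ℕ) (H : ℕ → ℕ) (L : ℕ) (i : Fin (H L))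
    (j : Fin (H 0)) :
    Differentiable ℝ fun w : EuclideanSpace ℝ (DlnVars H M) =>
      dlnProd H (dlnToMats M H fun v => w v) L i j := by
  induction L with
  | zero => exact differentiable_const _
  | succ L ih =>
    simp only [dlnProd, Matrix.mul_apply]
    refine Differentiable.fun_sum fun k _ => Differentiable.mul ?_ (ih k)
    by_cases h : L < M
    · simpa [dlnToMats, h] using
        (EuclideanSpace.proj (𝕜 := ℝ) (⟨⟨L, h⟩, (i, k)⟩ : DlnVars H M)).differentiable
    · simp [dlnToMats, h]

theorem differentiable_dlnEmpLoss (M : ℕ) (H : ℕ → ℕ) (n : ℕ) (x : Fin n → Fin (H 0) → ℝ)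
    (y : Fin n → Fin (H M) → ℝ) : Differentiable ℝ (dlnEmpLoss M H n x y) := by
  have := differentiable_dlnProd_apply M H M
  unfold dlnEmpLoss Matrix.mulVec dotProduct
  fun_prop

theorem differentiable_dlnLogPost (M : ℕ) (H : ℕ → ℕ) (n : ℕ) (x : Fin n → Fin (H 0) → ℝ)
    (y : Fin n → Fin (H M) → ℝ) (β γ : ℝ) (wμ : EuclideanSpace ℝ (DlnVars H M)) :
    Differentiable ℝ (dlnLogPost M H n x y β γ wμ) := by
  have := differentiable_dlnEmpLoss M H n x y
  have hsq := (differentiable_id.sub_const wμ).norm_sq ℝ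
  unfold dlnLogPost
  fun_prop

theorem dlnLogPost_smul_eq_eval {M : ℕ} {H : ℕ → ℕ} {n : ℕ} {x : Fin n → Fin (H 0) → ℝ}
    {y : Fin n → Fin (H M) → ℝ} (β γ : ℝ) (wμ : EuclideanSpace ℝ (DlnVars H M))
    {e : EuclideanSpace ℝ (DlnVars H M)} {P : ℝ[X]}
    (hP : ∀ t, dlnEmpLoss M H n x y (t • e) = P.eval t) (t : ℝ) :
    dlnLogPost M H n x y β γ wμ (t • e) =
      eval t (C (-(n * β)) * P - C (γ / 2) * (C (‖e‖ ^ 2) * X ^ 2 - C (2 * ⟪e, wμ⟫) * X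
        + C (‖wμ‖ ^ 2))) := by
  rw [dlnLogPost, hP, norm_sub_sq_real, norm_smul, real_inner_smul_left, mul_pow,
    Real.norm_eq_abs, sq_abs]
  simp only [eval_sub, eval_mul, eval_add, eval_C, eval_pow, eval_X]
  ring

theorem dln_logPost_gradient_not_lipschitz_general
    (M : ℕ) (hM : 2 ≤ M) (H : ℕ → ℕ) (hH : ∀ l ≤ M, 1 ≤ H l)
    (n : ℕ) (β γ : ℝ) (hβ : 0 < β)
    (X : Fin n → Fin (H 0) → ℝ) (hX : ∃ k, X k ≠ 0)
    (Y : Fin n → Fin (H M) → ℝ)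
    (wμ : EuclideanSpace ℝ (DlnVars H M)) :
    (¬ ∃ α : ℝ, 0 < α ∧ ∀ w₁ w₂ : EuclideanSpace ℝ (DlnVars H M),
        ‖gradient (dlnLogPost M H n X Y β γ wμ) w₁
          - gradient (dlnLogPost M H n X Y β γ wμ) w₂‖ ≤ α * ‖w₁ - w₂‖)
    ∧ (¬ ∃ α : ℝ, 0 < α ∧ ∀ w₁ w₂ : EuclideanSpace ℝ (DlnVars H M),
        ‖gradient (dlnEmpLoss M H n X Y) w₁
          - gradient (dlnEmpLoss M H n X Y) w₂‖ ≤ α * ‖w₁ - w₂‖) := by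
  obtain ⟨k₀, hk₀⟩ := hX
  obtain ⟨j₀, hj₀ : X k₀ j₀ ≠ 0⟩ := Function.ne_iff.mp hk₀
  let p : ℕ → ℕ := fun l => if l = 0 then j₀ else 0
  have hp : ∀ l ≤ M, p l < H l := fun l hl => by
    rcases Nat.eq_zero_or_pos l with rfl | hl0
    · exact j₀.2
    · simp only [p, if_neg hl0.ne']
      exact hH l hl
  have hloss := dlnEmpLoss_smul_dlnPathParam (by omega) hp X Y
  have hn : 0 < n := k₀.pos
  have hlead : 0 < (1 / n : ℝ) * ∑ k, X k j₀ ^ 2 := by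
    have : 0 < X k₀ j₀ ^ 2 := by positivity
    exact mul_pos (by positivity) (Finset.sum_pos' (fun k _ => sq_nonneg _) ⟨k₀, by simpa⟩)
  have h2M : 2 * M ≠ M ∧ 2 * M ≠ 2 ∧ 1 ≠ 2 * M ∧ 2 * M ≠ 0 := by omega
  refine ⟨not_exists_norm_sub_le_mul_of_forall_not_lipschitzWith fun K =>
      not_lipschitzWith_gradient_of_eval_smul (differentiable_dlnLogPost M H n X Y β γ wμ) ?_
        (dlnLogPost_smul_eq_eval β γ wμ hloss) K,
    not_exists_norm_sub_le_mul_of_forall_not_lipschitzWith fun K =>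
      not_lipschitzWith_gradient_of_eval_smul (differentiable_dlnEmpLoss M H n X Y) ?_ hloss K⟩
  all_goals refine (show 3 ≤ 2 * M by omega).trans (le_natDegree_of_ne_zero ?_)
  all_goals simp only [coeff_add, coeff_sub, coeff_C_mul, coeff_X_pow, coeff_X, coeff_C, h2M,
    if_true, if_false, mul_one, mul_zero, add_zero, sub_zero]
  · exact mul_ne_zero (neg_ne_zero.mpr (by positivity)) hlead.ne'
  · exact hlead.ne'

/-- for a deep linear network with `M ≥ 2` layers (and some nonzero
input), the gradient of the log tempered posterior is not globally Lipschitz; in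
particular `∇L_n` is not globally Lipschitz. -/
theorem dln_logPost_gradient_not_lipschitz
    (M : ℕ) (hM : 2 ≤ M) (H : ℕ → ℕ) (hH : ∀ l ≤ M, 1 ≤ H l)
    (n : ℕ) (hn : 0 < n) (β γ : ℝ) (hβ : 0 < β) (hγ : 0 < γ)
    (X : Fin n → Fin (H 0) → ℝ) (hX : ∃ k, X k ≠ 0)
    (Y : Fin n → Fin (H M) → ℝ)
    (wμ : EuclideanSpace ℝ (DlnVars H M)) :
    (¬ ∃ α : ℝ, 0 < α ∧ ∀ w₁ w₂ : EuclideanSpace ℝ (DlnVars H M),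
        ‖gradient (dlnLogPost M H n X Y β γ wμ) w₁
          - gradient (dlnLogPost M H n X Y β γ wμ) w₂‖ ≤ α * ‖w₁ - w₂‖)
    ∧ (¬ ∃ α : ℝ, 0 < α ∧ ∀ w₁ w₂ : EuclideanSpace ℝ (DlnVars H M),
        ‖gradient (dlnEmpLoss M H n X Y) w₁
          - gradient (dlnEmpLoss M H n X Y) w₂‖ ≤ α * ‖w₁ - w₂‖) :=
  dln_logPost_gradient_not_lipschitz_general M hM H hH n β γ hβ X hX Y wμ
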